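/- For all vectors ω, γ, δω, δγ ∈ ℝ³, the inverse right-trivialized derivative of the SE(3) Cayley-type map satisfies the block identity (I₄ − X(ω,γ)/2) · X(δω,δγ) · (I₄ + X(ω,γ)/2) = X(ω', γ'), where ω' := δω − (1/2) ω × δω + (1/4) (ω · δω) ω and γ' := (I₃ − (1/2)ω̂)(δγ − (1/2) γ × δω). Equivalently, the linear map (δω,δγ) ↦ (ω',γ') on ℝ³ × ℝ³ is given by the 6×6 block matrix [[I₃ − (1/2)ω̂ + (1/4) ω ωᵀ, 0],[−(1/2)(I₃ − (1/2)ω̂) γ̂, I₃ − (1/2)ω̂]]. -/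

import Mathlib

/-
Expanding the Cayley conjugation, `(1 - X/2) Y (1 + X/2) = Y - ½⁅X, Y⁆ - ¼ X Y X`, reduces the
identity to two facts about `se(3)`: the bracket `⁅X(a,u), X(b,v)⁆ = X(a × b, a × v - b × u)`, and
`X(a,u) X(b,v) X(a,u) = X(-(a·b) a, a × (b × u))`, where `â b̂ â = -(a·b) â` is the triple product
expansion. The block-matrix form is the same computation read off on `(δω, δγ)`, via `ω̂ v = ω × v`
and `(ω ωᵀ) v = (ω·v) ω`.
-/

open Matrix

noncomputable section

/-- The hat map `ω ↦ ω̂` sending a vector in `ℝ³` to the skew-symmetric matrix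
satisfying `ω̂ v = ω × v`. -/
def hat (ω : EuclideanSpace ℝ (Fin 3)) : Matrix (Fin 3) (Fin 3) ℝ :=
  !![0, -ω 2, ω 1; ω 2, 0, -ω 0; -ω 1, ω 0, 0]

/-- The cross product on `ℝ³`. -/
def cross (a b : EuclideanSpace ℝ (Fin 3)) : EuclideanSpace ℝ (Fin 3) :=
  WithLp.toLp 2 ![a 1 * b 2 - a 2 * b 1, a 2 * b 0 - a 0 * b 2, a 0 * b 1 - a 1 * b 0]

/-- The dot product on `ℝ³`. -/
def dot3 (a b : EuclideanSpace ℝ (Fin 3)) : ℝ :=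
  a 0 * b 0 + a 1 * b 1 + a 2 * b 2

/-- The embedding of `se(3)` into `4×4` real matrices: `X(ω,γ)` has upper-left `3×3`
block `ω̂`, upper-right column `γ`, and zero last row. -/
def Xse (ω γ : EuclideanSpace ℝ (Fin 3)) : Matrix (Fin 4) (Fin 4) ℝ :=
  !![0, -ω 2, ω 1, γ 0;
     ω 2, 0, -ω 0, γ 1;
     -ω 1, ω 0, 0, γ 2;
     0, 0, 0, 0]

theorem ofLp_cross (a b : EuclideanSpace ℝ (Fin 3)) :
    (cross a b : Fin 3 → ℝ) = (a : Fin 3 → ℝ) ⨯₃ (b : Fin 3 → ℝ) := by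
  simp [cross, cross_apply]

theorem dot3_eq_dotProduct (a b : EuclideanSpace ℝ (Fin 3)) :
    dot3 a b = (a : Fin 3 → ℝ) ⬝ᵥ (b : Fin 3 → ℝ) := by
  simp [dot3, dotProduct, Fin.sum_univ_three]

theorem hat_mulVec (ω : EuclideanSpace ℝ (Fin 3)) (v : Fin 3 → ℝ) :
    hat ω *ᵥ v = (ω : Fin 3 → ℝ) ⨯₃ v := by
  ext i
  fin_cases i <;> simp [hat, cross_apply, mulVec, dotProduct, Fin.sum_univ_three] <;> ring

theorem Xse_sub (a b u v : EuclideanSpace ℝ (Fin 3)) :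
    Xse (a - b) (u - v) = Xse a u - Xse b v := by
  ext i j
  fin_cases i <;> fin_cases j <;> simp [Xse] <;> ring

theorem Xse_smul (c : ℝ) (a u : EuclideanSpace ℝ (Fin 3)) :
    Xse (c • a) (c • u) = c • Xse a u := by
  ext i j
  fin_cases i <;> fin_cases j <;> simp [Xse]

theorem Xse_lie (a b u v : EuclideanSpace ℝ (Fin 3)) :
    ⁅Xse a u, Xse b v⁆ = Xse (cross a b) (cross a v - cross b u) := by
  rw [Ring.lie_def]
  ext i j
  fin_cases i <;> fin_cases j <;> simp [Xse, cross] <;> ring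

theorem Xse_mul_Xse_mul_Xse (a b u v : EuclideanSpace ℝ (Fin 3)) :
    Xse a u * Xse b v * Xse a u = Xse (-dot3 a b • a) (cross a (cross b u)) := by
  ext i j
  fin_cases i <;> fin_cases j <;> simp [Xse, cross, dot3] <;> ring

theorem one_sub_smul_mul_mul_one_add_smul {R A : Type*} [CommRing R] [Ring A] [Algebra R A]
    (c : R) (X Y : A) :
    (1 - c • X) * Y * (1 + c • X) = Y - c • ⁅X, Y⁆ - c ^ 2 • (X * Y * X) := by
  simp only [Ring.lie_def, sub_mul, mul_add, one_mul, mul_one, smul_mul_assoc, mul_smul_comm,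
    smul_sub, smul_smul, pow_two, mul_assoc]
  abel

/-- The inverse right-trivialized derivative of the `SE(3)` Cayley-type map:
`(I₄ − X(ω,γ)/2) X(δω,δγ) (I₄ + X(ω,γ)/2) = X(ω',γ')` with
`ω' = δω − (1/2) ω × δω + (1/4)(ω·δω) ω` and `γ' = (I₃ − (1/2)ω̂)(δγ − (1/2) γ × δω)`;
equivalently, `(δω,δγ) ↦ (ω',γ')` is given by the `6×6` block matrix
`[[I₃ − (1/2)ω̂ + (1/4) ω ωᵀ, 0], [−(1/2)(I₃ − (1/2)ω̂) γ̂, I₃ − (1/2)ω̂]]`. -/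
theorem dtau_inverse_block_identity (ω γ δω δγ : EuclideanSpace ℝ (Fin 3)) :
    ((1 : Matrix (Fin 4) (Fin 4) ℝ) - (1/2 : ℝ) • Xse ω γ) * Xse δω δγ *
        ((1 : Matrix (Fin 4) (Fin 4) ℝ) + (1/2 : ℝ) • Xse ω γ)
      = Xse (δω - (1/2 : ℝ) • cross ω δω + (1/4 : ℝ) • (dot3 ω δω • ω))
          (WithLp.toLp 2 (((1 : Matrix (Fin 3) (Fin 3) ℝ) - (1/2 : ℝ) • hat ω) *ᵥ
            (δγ - (1/2 : ℝ) • cross γ δω))) ∧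
    (Matrix.fromBlocks
          ((1 : Matrix (Fin 3) (Fin 3) ℝ) - (1/2 : ℝ) • hat ω +
            (1/4 : ℝ) • vecMulVec (ω : Fin 3 → ℝ) (ω : Fin 3 → ℝ))
          (0 : Matrix (Fin 3) (Fin 3) ℝ)
          (-((1/2 : ℝ) • (((1 : Matrix (Fin 3) (Fin 3) ℝ) - (1/2 : ℝ) • hat ω) * hat γ)))
          ((1 : Matrix (Fin 3) (Fin 3) ℝ) - (1/2 : ℝ) • hat ω)) *ᵥ
        Sum.elim (δω : Fin 3 → ℝ) (δγ : Fin 3 → ℝ)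
      = Sum.elim
          ((δω - (1/2 : ℝ) • cross ω δω + (1/4 : ℝ) • (dot3 ω δω • ω) : EuclideanSpace ℝ (Fin 3)) :
            Fin 3 → ℝ)
          (((1 : Matrix (Fin 3) (Fin 3) ℝ) - (1/2 : ℝ) • hat ω) *ᵥ
            (δγ - (1/2 : ℝ) • cross γ δω)) := by
  constructor
  · rw [one_sub_smul_mul_mul_one_add_smul, Xse_lie, Xse_mul_Xse_mul_Xse, ← Xse_smul, ← Xse_smul,
      ← Xse_sub, ← Xse_sub]
    congr 1
    · module
    · apply WithLp.ofLp_injective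
      simp only [WithLp.ofLp_sub, WithLp.ofLp_smul, ofLp_cross, sub_mulVec, one_mulVec,
        smul_mulVec, hat_mulVec, map_sub, map_smul]
      rw [← cross_anticomm δω γ]
      simp only [map_neg]
      module
  · rw [fromBlocks_mulVec, Sum.elim_comp_inl, Sum.elim_comp_inr, zero_mulVec, add_zero]
    congr 1
    · simp only [add_mulVec, sub_mulVec, one_mulVec, smul_mulVec, hat_mulVec, vecMulVec_mulVec,
        op_smul_eq_smul, WithLp.ofLp_add, WithLp.ofLp_sub, WithLp.ofLp_smul, ofLp_cross,
        dot3_eq_dotProduct]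
    · rw [neg_mulVec, smul_mulVec, ← mulVec_mulVec, hat_mulVec, ofLp_cross, mulVec_sub,
        mulVec_smul]
      abel
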